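/- Let C be a linear [n,k] code over F_q with dual distance d⊥. For every integer ν with 0 ≤ ν < d⊥, Σ_{i=ν}^{n} binom(i,ν) A_i = q^{k-ν} binom(n,ν)(q-1)^{ν}. -/

import Mathlib

/-!
Count the pairs `(x, S)` with `x ∈ C` and `S` a `ν`-subset of the support of `x`. Grouping by `x`
gives `∑ᵢ C(i, ν) Aᵢ`. Grouping by `S`: as `|S| = ν < d⊥`, no nonzero dual codeword is supported
in `S`, so the projection of `C` onto the coordinates in `S` is onto `F^S`. Its fibres all have
`q^k / q^ν` elements, and `(q - 1)^ν` points of `F^S` have no zero coordinate.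
-/

open Finset

namespace Submodule

variable {R F ι : Type*}

def restrictCoords [Semiring R] (C : Submodule R (ι → R)) (S : Finset ι) : C →ₗ[R] (S → R) :=
  (LinearMap.funLeft R R ((↑) : S → ι)).comp C.subtype

variable [Field F] [Fintype ι] [DecidableEq ι]

theorem restrictCoords_surjective (C : Submodule F (ι → F)) (S : Finset ι)
    (h : ∀ y : ι → F, (∀ x ∈ C, ∑ i, x i * y i = 0) → (∀ i ∉ S, y i = 0) → y = 0) :
    Function.Surjective (C.restrictCoords S) := by
  rw [← LinearMap.range_eq_top, ← dualAnnihilator_eq_bot_iff, eq_bot_iff]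
  intro φ hφ
  rw [mem_dualAnnihilator] at hφ
  -- `φ` composed with the restriction is the dot product with a dual codeword `y` supported in `S`.
  set restrict := LinearMap.funLeft F F ((↑) : S → ι)
  set y : ι → F := fun i => φ (restrict fun j => if i = j then 1 else 0)
  have hφy : ∀ x, φ (restrict x) = ∑ i, x i * y i := by
    simpa [mul_comm] using LinearMap.pi_apply_eq_sum_univ (φ ∘ₗ restrict)
  have hy : y = 0 := by
    refine h y (fun x hx => (hφy x).symm.trans (hφ _ ⟨⟨x, hx⟩, rfl⟩)) fun i hi => ?_
    have : (restrict fun j => if i = j then (1 : F) else 0) = 0 := by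
      ext j
      simp [restrict, LinearMap.funLeft_apply, show i ≠ j from fun hij => hi (hij ▸ j.2)]
    simp [y, this]
  refine LinearMap.ext fun a => ?_
  obtain ⟨b, rfl⟩ := LinearMap.funLeft_surjective_of_injective F F _ Subtype.val_injective a
  simpa [hy] using hφy b

theorem restrictCoords_surjective_of_card_lt [DecidableEq F] (C : Submodule F (ι → F))
    (S : Finset ι)
    (h : ∀ y : ι → F, (∀ x ∈ C, ∑ i, x i * y i = 0) → y ≠ 0 → #S < hammingNorm y) :
    Function.Surjective (C.restrictCoords S) := by
  refine C.restrictCoords_surjective S fun y hy hyS => ?_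
  by_contra hy0
  have hweight : hammingNorm y ≤ #S := card_le_card fun i hi => by
    by_contra hiS
    exact (mem_filter.1 hi).2 (hyS i hiS)
  exact (h y hy hy0).not_ge hweight

end Submodule

theorem AddMonoidHom.card_preimage_mul_card_eq_of_surjective {G H : Type*} [AddGroup G]
    [Fintype G] [AddGroup H] [Fintype H] [DecidableEq H] (f : G →+ H)
    (hf : Function.Surjective f) (t : Finset H) :
    #{g | f g ∈ t} * Fintype.card H = #t * Fintype.card G := by
  have hfiber : ∀ h, #{g | f g = h} = #{g | f g = 0} := fun h =>
    card_fiber_eq_of_mem_range f (hf h) ⟨0, map_zero f⟩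
  have hpreimage : ∀ t : Finset H, #{g | f g ∈ t} = #t * #{g | f g = 0} := by
    intro t
    rw [card_eq_sum_card_fiberwise (s := {g | f g ∈ t}) fun g hg => by simpa using hg,
      ← smul_eq_mul, ← sum_const]
    refine sum_congr rfl fun h hh => ?_
    rw [← hfiber h, filter_filter]
    congr 1
    exact filter_congr fun g _ => ⟨And.right, fun hg => ⟨hg ▸ hh, hg⟩⟩
  have huniv := hpreimage univ
  simp only [mem_univ, filter_true, card_univ] at huniv
  rw [hpreimage, huniv]
  ring

theorem Submodule.card_forall_ne_zero_of_restrictCoords_surjective {F ι : Type*} [Field F]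
    [Fintype F] [DecidableEq F] [Fintype ι] [DecidableEq ι] (C : Submodule F (ι → F))
    [Fintype C] (S : Finset ι) (hS : Function.Surjective (C.restrictCoords S)) :
    (#{x : C | ∀ i ∈ S, (x : ι → F) i ≠ 0} : ℚ)
      = ((Fintype.card F : ℚ) - 1) ^ #S
        * (Fintype.card F : ℚ) ^ ((Module.finrank F C : ℤ) - #S) := by
  have key := AddMonoidHom.card_preimage_mul_card_eq_of_surjective
    (C.restrictCoords S).toAddMonoidHom hS (Fintype.piFinset fun _ => {0}ᶜ)
  simp only [Fintype.mem_piFinset, mem_compl, mem_singleton, Subtype.forall,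
    Fintype.card_piFinset, card_compl, card_singleton, prod_const, card_univ, Fintype.card_fun,
    Fintype.card_coe, Module.card_eq_pow_finrank (K := F) (V := C)] at key
  have hq : 1 ≤ Fintype.card F := Fintype.card_pos
  have hq0 : (Fintype.card F : ℚ) ≠ 0 := by positivity
  rw [zpow_sub₀ hq0, zpow_natCast, zpow_natCast, ← mul_div_assoc, eq_div_iff (pow_ne_zero _ hq0)]
  exact_mod_cast key

theorem Finset.sum_card_choose_eq_sum_card_superset {α ι : Type*} [Fintype ι] [DecidableEq ι]
    (s : Finset α) (supp : α → Finset ι) (ν : ℕ) :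
    ∑ x ∈ s, (#(supp x)).choose ν = ∑ T ∈ powersetCard ν univ, #{x ∈ s | T ⊆ supp x} := by
  calc ∑ x ∈ s, (#(supp x)).choose ν
      = ∑ x ∈ s, #((powersetCard ν univ).bipartiteBelow (· ⊆ supp ·) x) := by
        refine sum_congr rfl fun x _ => ?_
        rw [← card_powersetCard]
        congr 1
        ext T
        simp [bipartiteBelow, mem_powersetCard, and_comm]
    _ = _ := (sum_card_bipartiteAbove_eq_sum_card_bipartiteBelow _).symm

theorem Finset.sum_Icc_choose_mul_card_fiber {α : Type*} [Fintype α] (w : α → ℕ) {n : ℕ}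
    (hw : ∀ x, w x ≤ n) (ν : ℕ) :
    ∑ i ∈ Icc ν n, i.choose ν * #{x | w x = i} = ∑ x, (w x).choose ν := by
  calc ∑ i ∈ Icc ν n, i.choose ν * #{x | w x = i}
      = ∑ i ∈ Icc ν n, ∑ x with w x = i, (w x).choose ν := by
        refine sum_congr rfl fun i _ => ?_
        rw [sum_congr rfl fun x hx => by rw [(mem_filter.1 hx).2], sum_const, smul_eq_mul,
          mul_comm]
    _ = ∑ x with w x ∈ Icc ν n, (w x).choose ν := sum_fiberwise_eq_sum_filter _ _ _ _
    _ = ∑ x, (w x).choose ν := sum_filter_of_ne fun x _ hx =>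
        mem_Icc.2 ⟨not_lt.1 fun h => hx (Nat.choose_eq_zero_of_lt h), hw x⟩

/-- **Pless equations below the dual distance.** For a linear `[n,k]` code `C` over `F_q`
with dual distance `d⊥`, for every `0 ≤ ν < d⊥`:
`∑_{i=ν}^{n} C(i,ν) A_i = q^{k-ν} C(n,ν)(q-1)^{ν}`. -/
theorem pless_equations_small_nu
    (q n k dperp : ℕ) (F : Type*) [Field F] [Fintype F] [DecidableEq F]
    (hq : Fintype.card F = q)
    (C : Submodule F (Fin n → F)) (hk : Module.finrank F C = k)
    (A : ℕ → ℕ)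
    (hA : ∀ s, A s = Nat.card {x : Fin n → F // x ∈ C ∧ hammingNorm x = s})
    (hdperp : IsLeast {w : ℕ | ∃ y : Fin n → F,
      (∀ x ∈ C, ∑ i, x i * y i = 0) ∧ y ≠ 0 ∧ hammingNorm y = w} dperp)
    (ν : ℕ) (hν : ν < dperp) :
    ∑ i ∈ Icc ν n, (i.choose ν : ℚ) * A i
      = (q : ℚ) ^ ((k : ℤ) - ν) * (n.choose ν : ℚ) * ((q : ℚ) - 1) ^ ν := by
  classical
  have hA' : ∀ i, A i = #{x : C | hammingNorm (x : Fin n → F) = i} := fun i => by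
    rw [hA, ← Nat.card_congr (Equiv.subtypeSubtypeEquivSubtypeInter (· ∈ C) _),
      Nat.card_eq_fintype_card, Fintype.card_subtype]
  have hcount : ∀ S ∈ powersetCard ν (univ : Finset (Fin n)),
      (#{x : C | ∀ i ∈ S, (x : Fin n → F) i ≠ 0} : ℚ) = ((q : ℚ) - 1) ^ ν * q ^ ((k : ℤ) - ν) := by
    intro S hS
    rw [mem_powersetCard_univ] at hS
    rw [← hq, ← hk, ← hS]
    -- `convert` reconciles two decidability instances of `∀ i ∈ S, _` over `Fin n`.
    convert C.card_forall_ne_zero_of_restrictCoords_surjective S ?_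
    exact C.restrictCoords_surjective_of_card_lt S fun y hy hy0 =>
      hS ▸ hν.trans_le (hdperp.2 ⟨y, hy, hy0, rfl⟩)
  calc ∑ i ∈ Icc ν n, (i.choose ν : ℚ) * A i
      = ∑ x : C, ((hammingNorm (x : Fin n → F)).choose ν : ℚ) := by
        simp only [hA']
        exact_mod_cast sum_Icc_choose_mul_card_fiber _
          (fun x => hammingNorm_le_card_fintype.trans_eq (Fintype.card_fin n)) ν
    _ = ∑ S ∈ powersetCard ν univ, (#{x : C | ∀ i ∈ S, (x : Fin n → F) i ≠ 0} : ℚ) := by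
        have := sum_card_choose_eq_sum_card_superset univ
          (fun x : C => {i | (x : Fin n → F) i ≠ 0}) ν
        simp only [subset_iff, mem_filter, mem_univ, true_and] at this
        exact_mod_cast this
    _ = (q : ℚ) ^ ((k : ℤ) - ν) * (n.choose ν : ℚ) * ((q : ℚ) - 1) ^ ν := by
        rw [sum_congr rfl hcount, sum_const, card_powersetCard, card_univ, Fintype.card_fin,
          nsmul_eq_mul]
        ring
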